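/- Assume the tentative-update setting with x⁺ ≠ x, and additionally that f : ℝⁿ → ℝ is convex and differentiable with l(y) ≤ f(y) for all y ∈ ℝⁿ and l(x) = f(x). Then ⟨∇f(x), v⟩ + g(x⁺) − g(x) < −(1/2)⟨v, (H + λI)v⟩; that is, the derivative at t = 0 of the line-search surrogate φ(t) = f(x + t v) + t g(x⁺) + (1 − t) g(x) is strictly less than −(1/2)⟨v, (H + λI)v⟩. -/

import Mathlib

open scoped RealInnerProductSpace

/-!
Write `F = l + g` and `Q = ⟪v, (H + λI) v⟫`, which is positive because `H ⪰ 0`, `λ > 0`, `v ≠ 0`.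
Testing the minimality of `x⁺` against the midpoint of `x` and `x⁺` and using the convexity of
`F` gives `F x⁺ - F x ≤ -(3/4) Q`. Since the differentiable `f` lies above the convex `l` and
touches it at `x`, `∇f(x)` is a subgradient of `l` at `x`, so `⟪∇f(x), v⟫ ≤ l x⁺ - l x`.
Adding the two bounds, the left-hand side is at most `-(3/4) Q < -(1/2) Q`.
-/

open Set

lemma ConvexOn.le_slope_of_hasDerivAt_of_le {h ψ : ℝ → ℝ} {d a y : ℝ}
    (hh : ConvexOn ℝ univ h) (hψ : HasDerivAt ψ d a) (hle : ∀ t, h t ≤ ψ t) (heq : h a = ψ a)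
    (hay : a < y) : d ≤ slope h a y := by
  have hslope : ∀ t < a, slope ψ a t ≤ slope h a y := fun t hta => calc
    slope ψ a t ≤ slope h a t := by
      simp only [slope_def_field, heq]
      exact div_le_div_of_nonpos_of_le (by linarith) (by linarith [hle t])
    _ ≤ slope h a y := hh.slope_mono (mem_univ a) ⟨mem_univ t, hta.ne⟩ ⟨mem_univ y, hay.ne'⟩
        (hta.trans hay).le
  have htendsto : Filter.Tendsto (slope ψ a) (nhdsWithin a (Iio a)) (nhds d) :=
    (hasDerivAt_iff_tendsto_slope.mp hψ).mono_left (nhdsWithin_mono a fun _ ht => ne_of_lt ht)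
  exact le_of_tendsto htendsto (eventually_nhdsWithin_of_forall hslope)

lemma ConvexOn.le_sub_of_hasFDerivAt_of_le {E : Type*} [NormedAddCommGroup E] [NormedSpace ℝ E]
    {l φ : E → ℝ} {φ' : E →L[ℝ] ℝ} {x : E} (hl : ConvexOn ℝ univ l) (hφ : HasFDerivAt φ φ' x)
    (hle : ∀ z, l z ≤ φ z) (heq : l x = φ x) (y : E) : φ' (y - x) ≤ l y - l x := by
  have hline : HasDerivAt (φ ∘ AffineMap.lineMap (k := ℝ) x y) (φ' (y - x)) 0 :=
    hφ.comp_hasDerivAt_of_eq (0 : ℝ) AffineMap.hasDerivAt_lineMap (by simp)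
  simpa [slope_def_field] using
    (hl.comp_affineMap (AffineMap.lineMap x y)).le_slope_of_hasDerivAt_of_le hline
      (fun t => hle _) (by simpa using heq) zero_lt_one

lemma ConvexOn.add_inner_le_of_forall_add_inner_le {E : Type*} [NormedAddCommGroup E]
    [InnerProductSpace ℝ E] {F : E → ℝ} (A : E →ₗ[ℝ] E) {x xp : E} (hF : ConvexOn ℝ univ F)
    (hmin : ∀ y, F xp + (1/2) * ⟪xp - x, A (xp - x)⟫ ≤ F y + (1/2) * ⟪y - x, A (y - x)⟫) :
    F xp + (3/4) * ⟪xp - x, A (xp - x)⟫ ≤ F x := by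
  set Q := ⟪xp - x, A (xp - x)⟫
  have hmid := hmin ((1/2 : ℝ) • x + (1/2 : ℝ) • xp)
  have hquad : ⟪(1/2 : ℝ) • x + (1/2 : ℝ) • xp - x, A ((1/2 : ℝ) • x + (1/2 : ℝ) • xp - x)⟫
      = (1/4) * Q := by
    rw [show (1/2 : ℝ) • x + (1/2 : ℝ) • xp - x = (1/2 : ℝ) • (xp - x) by module, map_smul,
      real_inner_smul_left, real_inner_smul_right]
    ring
  have hconv := hF.2 (mem_univ x) (mem_univ xp) (by norm_num : (0 : ℝ) ≤ 1/2)
    (by norm_num : (0 : ℝ) ≤ 1/2) (by norm_num)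
  simp only [smul_eq_mul] at hconv
  linarith

lemma Matrix.inner_toEuclideanLin_add_smul_one {n : ℕ} (H : Matrix (Fin n) (Fin n) ℝ) (lam : ℝ)
    (z : EuclideanSpace ℝ (Fin n)) :
    ⟪z, Matrix.toEuclideanLin (H + lam • 1) z⟫ =
      ⟪z, Matrix.toEuclideanLin H z⟫ + lam * ‖z‖ ^ 2 := by
  rw [map_add, map_smul, Matrix.toLpLin_one, LinearMap.add_apply, LinearMap.smul_apply,
    LinearMap.id_apply, inner_add_right, real_inner_smul_right, real_inner_self_eq_norm_sq]

theorem stmt_8_general (n : ℕ)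
    (l g f : EuclideanSpace ℝ (Fin n) → ℝ)
    (hl : ConvexOn ℝ Set.univ l) (hg : ConvexOn ℝ Set.univ g)
    (H : Matrix (Fin n) (Fin n) ℝ)
    (hH : ∀ z : EuclideanSpace ℝ (Fin n), 0 ≤ ⟪z, Matrix.toEuclideanLin H z⟫)
    (lam : ℝ) (hlam : 0 < lam)
    (x xp : EuclideanSpace ℝ (Fin n))
    (hmin : ∀ y,
      l xp + g xp + (1/2) * ⟪xp - x, Matrix.toEuclideanLin (H + lam • 1) (xp - x)⟫ ≤
      l y + g y + (1/2) * ⟪y - x, Matrix.toEuclideanLin (H + lam • 1) (y - x)⟫)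
    (hne : xp ≠ x)
    (hfd : Differentiable ℝ f)
    (hle : ∀ y, l y ≤ f y) (htight : l x = f x) :
    ⟪gradient f x, xp - x⟫ + g xp - g x <
      -(1/2) * ⟪xp - x, Matrix.toEuclideanLin (H + lam • 1) (xp - x)⟫ := by
  have hQ : 0 < ⟪xp - x, Matrix.toEuclideanLin (H + lam • 1) (xp - x)⟫ := by
    rw [Matrix.inner_toEuclideanLin_add_smul_one]
    have hv : 0 < ‖xp - x‖ := norm_pos_iff.mpr (sub_ne_zero.mpr hne)
    linarith [hH (xp - x), mul_pos hlam (pow_pos hv 2)]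
  have hdescent := (hl.add hg).add_inner_le_of_forall_add_inner_le _ hmin
  simp only [Pi.add_apply] at hdescent
  have hsubgrad := hl.le_sub_of_hasFDerivAt_of_le (hfd x).hasGradientAt.hasFDerivAt hle htight xp
  rw [InnerProductSpace.toDual_apply_apply] at hsubgrad
  linarith

/-- Tentative-update setting with `x⁺ ≠ x`, `l` a convex minorant of the convex
differentiable `f` tight at `x`: the derivative at `t = 0` of the line-search surrogate
`φ(t) = f(x + tv) + t g(x⁺) + (1 − t) g(x)`, namely `⟨∇f(x), v⟩ + g(x⁺) − g(x)`,
is strictly less than `−(1/2)⟨v, (H + λI)v⟩`. -/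
theorem stmt_8 (n : ℕ)
    (l g f : EuclideanSpace ℝ (Fin n) → ℝ)
    (hl : ConvexOn ℝ Set.univ l) (hg : ConvexOn ℝ Set.univ g)
    (H : Matrix (Fin n) (Fin n) ℝ)
    (hH : ∀ z : EuclideanSpace ℝ (Fin n), 0 ≤ ⟪z, Matrix.toEuclideanLin H z⟫)
    (lam : ℝ) (hlam : 0 < lam)
    (x xp : EuclideanSpace ℝ (Fin n))
    (hmin : ∀ y,
      l xp + g xp + (1/2) * ⟪xp - x, Matrix.toEuclideanLin (H + lam • 1) (xp - x)⟫ ≤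
      l y + g y + (1/2) * ⟪y - x, Matrix.toEuclideanLin (H + lam • 1) (y - x)⟫)
    (hne : xp ≠ x)
    (hf : ConvexOn ℝ Set.univ f) (hfd : Differentiable ℝ f)
    (hle : ∀ y, l y ≤ f y) (htight : l x = f x) :
    ⟪gradient f x, xp - x⟫ + g xp - g x <
      -(1/2) * ⟪xp - x, Matrix.toEuclideanLin (H + lam • 1) (xp - x)⟫ :=
  stmt_8_general n l g f hl hg H hH lam hlam x xp hmin hne hfd hle htight
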